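/- The class of all monounary algebras has the push-up property: for all monounary algebras A and B, if there is a monounary algebra C with C ⋖ A and C ⋖ B, then there is a monounary algebra D with A ⋖ D and B ⋖ D. -/

import Mathlib

/-- A monounary algebra: a type equipped with one unary operation. -/
structure MonoUnary : Type 1 where
  carrier : Type
  op : carrier → carrier

namespace MonoUnary

/-- The subalgebra of `A` generated by `X`: the closure of `X` under the operation. -/
def closure (A : MonoUnary) (X : Set A.carrier) : Set A.carrier :=
  {y | ∃ x ∈ X, ∃ n : ℕ, A.op^[n] x = y}

/-- Isomorphism of monounary algebras. -/
def Iso (A B : MonoUnary) : Prop :=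
  ∃ e : A.carrier ≃ B.carrier, ∀ x, e (A.op x) = B.op (e x)

/-- The monounary algebra induced on a subset closed under the operation. -/
def restrict (B : MonoUnary) (S : Set B.carrier) (hS : ∀ x ∈ S, B.op x ∈ S) : MonoUnary where
  carrier := ↥S
  op := fun x => ⟨B.op x.1, hS x.1 x.2⟩

/-- `A` is largely embeddable into `B`: `B` has a large subalgebra isomorphic to `A`,
i.e. a (nonempty, closed) subset `S` such that together with one extra element `b`
it generates the whole of `B`. -/
def LargeEmb (A B : MonoUnary) : Prop :=
  ∃ (S : Set B.carrier) (hS : ∀ x ∈ S, B.op x ∈ S), S.Nonempty ∧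
    Iso A (B.restrict S hS) ∧ ∃ b : B.carrier, B.closure (S ∪ {b}) = Set.univ

/-- One step in the network of large embeddings (symmetric closure of `⋖`). -/
def Step (A B : MonoUnary) : Prop := LargeEmb A B ∨ LargeEmb B A

/-- There is a path of length `n` between `A` and `B` in the network. -/
def HasPath (A B : MonoUnary) (n : ℕ) : Prop :=
  ∃ C : ℕ → MonoUnary, Iso (C 0) A ∧ Iso (C n) B ∧ ∀ i < n, Step (C i) (C (i + 1))

/-- The generator distance between monounary algebras, in `ℕ ∪ {∞}`. -/
noncomputable def dis (A B : MonoUnary) : ℕ∞ :=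
  sInf {q : ℕ∞ | ∃ n : ℕ, q = (n : ℕ∞) ∧ HasPath A B n}

/-- The minimum number of generators of `A`, `∞` if `A` is not finitely generated. -/
noncomputable def MGen (A : MonoUnary) : ℕ∞ :=
  sInf {q : ℕ∞ | ∃ X : Finset A.carrier, q = (X.card : ℕ∞) ∧ A.closure ↑X = Set.univ}

/-- A monounary algebra is connected iff any two elements have trajectories that meet. -/
def Connected (A : MonoUnary) : Prop :=
  ∀ a b : A.carrier, ∃ k m : ℕ, A.op^[k] a = A.op^[m] b

end MonoUnary

/-!
Take for `D` the amalgamation of `A` and `B` over `C`: the points of `A` together with the points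
of `B` outside its copy of `C`, where an orbit of `B` entering that copy continues in `A`. The
copy of `C` in `B` now lies inside `A`, so `A` and the image of the extra generator of `B` over
`C` generate `D`; symmetrically, the image of `B` and the extra generator of `A` over `C` do.
-/

namespace MonoUnary

open Function Set

section Closure

variable {A D : MonoUnary}

theorem subset_closure (X : Set A.carrier) : X ⊆ A.closure X :=
  fun x hx => ⟨x, hx, 0, rfl⟩

theorem closure_mono {X Y : Set A.carrier} (h : X ⊆ Y) : A.closure X ⊆ A.closure Y :=
  fun _ ⟨x, hx, n, hn⟩ => ⟨x, h hx, n, hn⟩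

theorem image_closure {f : A.carrier → D.carrier} (hf : Semiconj f A.op D.op)
    (X : Set A.carrier) : f '' A.closure X = D.closure (f '' X) := by
  ext y
  constructor
  · rintro ⟨_, ⟨x, hx, n, rfl⟩, rfl⟩
    exact ⟨f x, mem_image_of_mem f hx, n, ((hf.iterate_right n).eq x).symm⟩
  · rintro ⟨_, ⟨x, hx, rfl⟩, n, rfl⟩
    exact ⟨A.op^[n] x, ⟨x, hx, n, rfl⟩, (hf.iterate_right n).eq x⟩

end Closure

theorem semiconj_val_restrict (B : MonoUnary) (S : Set B.carrier) (hS : ∀ x ∈ S, B.op x ∈ S) :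
    Semiconj Subtype.val (B.restrict S hS).op B.op :=
  fun _ => rfl

theorem largeEmb_of_injective {A D : MonoUnary} [Nonempty A.carrier]
    {f : A.carrier → D.carrier} (hf : Injective f) (hsc : Semiconj f A.op D.op) {d : D.carrier}
    (hd : D.closure (range f ∪ {d}) = univ) : LargeEmb A D := by
  refine ⟨range f, ?_, range_nonempty f, ⟨Equiv.ofInjective f hf, fun a => ?_⟩, d, hd⟩
  · rintro _ ⟨a, rfl⟩
    exact ⟨A.op a, hsc a⟩
  · exact Subtype.ext (hsc a)

/-- For a homomorphism `ψ` from the subalgebra `S` of `B` into `A`, the pushout of `A ← S → B`. -/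
noncomputable def glue (A B : MonoUnary) (S : Set B.carrier) (ψ : S → A.carrier) :
    MonoUnary where
  carrier := A.carrier ⊕ {x : B.carrier // x ∉ S}
  op
    | .inl a => .inl (A.op a)
    | .inr x =>
      open Classical in
      if h : B.op x.1 ∈ S then .inl (ψ ⟨B.op x.1, h⟩) else .inr ⟨B.op x.1, h⟩

def glueInl (A B : MonoUnary) (S : Set B.carrier) (ψ : S → A.carrier) :
    A.carrier → (glue A B S ψ).carrier :=
  Sum.inl

open Classical in
noncomputable def glueMap (A B : MonoUnary) (S : Set B.carrier) (ψ : S → A.carrier) :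
    B.carrier → (glue A B S ψ).carrier := fun x =>
  if h : x ∈ S then glueInl A B S ψ (ψ ⟨x, h⟩) else Sum.inr ⟨x, h⟩

section Glue

variable {A B : MonoUnary} {S : Set B.carrier} {ψ : S → A.carrier}

theorem glueInl_injective : Injective (glueInl A B S ψ) :=
  Sum.inl_injective

theorem semiconj_glueInl : Semiconj (glueInl A B S ψ) A.op (glue A B S ψ).op :=
  fun _ => rfl

theorem glueMap_of_mem {x : B.carrier} (hx : x ∈ S) :
    glueMap A B S ψ x = glueInl A B S ψ (ψ ⟨x, hx⟩) :=
  dif_pos hx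

theorem glueMap_of_notMem {x : B.carrier} (hx : x ∉ S) :
    glueMap A B S ψ x = (Sum.inr ⟨x, hx⟩ : (glue A B S ψ).carrier) :=
  dif_neg hx

theorem semiconj_glueMap {hS : ∀ x ∈ S, B.op x ∈ S} (hψ : Semiconj ψ (B.restrict S hS).op A.op) :
    Semiconj (glueMap A B S ψ) B.op (glue A B S ψ).op := by
  intro x
  by_cases hx : x ∈ S
  · rw [glueMap_of_mem hx, glueMap_of_mem (hS x hx)]
    exact congrArg (glueInl A B S ψ) (hψ ⟨x, hx⟩)
  · rw [glueMap_of_notMem hx]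
    rfl

theorem glueMap_injective (hψ : Injective ψ) : Injective (glueMap A B S ψ) := by
  intro x y h
  by_cases hx : x ∈ S <;> by_cases hy : y ∈ S
  · rw [glueMap_of_mem hx, glueMap_of_mem hy] at h
    exact congrArg Subtype.val (hψ (glueInl_injective h))
  · rw [glueMap_of_mem hx, glueMap_of_notMem hy] at h
    exact (Sum.inl_ne_inr h).elim
  · rw [glueMap_of_notMem hx, glueMap_of_mem hy] at h
    exact (Sum.inr_ne_inl h).elim
  · rw [glueMap_of_notMem hx, glueMap_of_notMem hy] at h
    exact congrArg Subtype.val (Sum.inr_injective h)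

theorem range_glueInl_union_range_glueMap :
    range (glueInl A B S ψ) ∪ range (glueMap A B S ψ) = univ := by
  refine eq_univ_of_forall fun
    | .inl a => Or.inl ⟨a, rfl⟩
    | .inr ⟨x, hx⟩ => Or.inr ⟨x, glueMap_of_notMem hx⟩

theorem glueMap_image_subset_range_glueInl : glueMap A B S ψ '' S ⊆ range (glueInl A B S ψ) := by
  rintro _ ⟨x, hx, rfl⟩
  exact ⟨ψ ⟨x, hx⟩, (glueMap_of_mem hx).symm⟩

theorem glueInl_image_range_subset_range_glueMap :
    glueInl A B S ψ '' range ψ ⊆ range (glueMap A B S ψ) := by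
  rintro _ ⟨_, ⟨s, rfl⟩, rfl⟩
  exact ⟨s, glueMap_of_mem s.2⟩

theorem largeEmb_glue_left [Nonempty A.carrier] {hS : ∀ x ∈ S, B.op x ∈ S}
    (hψ : Semiconj ψ (B.restrict S hS).op A.op) {b : B.carrier}
    (hb : B.closure (S ∪ {b}) = univ) : LargeEmb A (glue A B S ψ) := by
  refine largeEmb_of_injective glueInl_injective semiconj_glueInl (d := glueMap A B S ψ b) ?_
  have hrange : range (glueMap A B S ψ) ⊆
      (glue A B S ψ).closure (range (glueInl A B S ψ) ∪ {glueMap A B S ψ b}) := by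
    rw [← image_univ, ← hb, image_closure (semiconj_glueMap hψ), image_union, image_singleton]
    exact closure_mono (union_subset_union_left _ glueMap_image_subset_range_glueInl)
  refine eq_univ_of_univ_subset ?_
  rw [← range_glueInl_union_range_glueMap]
  exact union_subset (subset_union_left.trans (subset_closure _)) hrange

theorem largeEmb_glue_right [Nonempty B.carrier] {hS : ∀ x ∈ S, B.op x ∈ S}
    (hψ : Semiconj ψ (B.restrict S hS).op A.op) (hψinj : Injective ψ) {a : A.carrier}
    (ha : A.closure (range ψ ∪ {a}) = univ) : LargeEmb B (glue A B S ψ) := by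
  refine largeEmb_of_injective (glueMap_injective hψinj) (semiconj_glueMap hψ)
    (d := glueInl A B S ψ a) ?_
  have hrange : range (glueInl A B S ψ) ⊆
      (glue A B S ψ).closure (range (glueMap A B S ψ) ∪ {glueInl A B S ψ a}) := by
    rw [← image_univ, ← ha, image_closure semiconj_glueInl, image_union, image_singleton]
    exact closure_mono (union_subset_union_left _ glueInl_image_range_subset_range_glueMap)
  refine eq_univ_of_univ_subset ?_
  rw [← range_glueInl_union_range_glueMap]
  exact union_subset hrange (subset_union_left.trans (subset_closure _))

end Glue

end MonoUnary

/-- The class of all monounary algebras has the push-up property. -/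
theorem monounary_push_up (A B C : MonoUnary)
    (hCA : MonoUnary.LargeEmb C A) (hCB : MonoUnary.LargeEmb C B) :
    ∃ D : MonoUnary, MonoUnary.LargeEmb A D ∧ MonoUnary.LargeEmb B D := by
  obtain ⟨SA, hSA, -, ⟨e₁, he₁⟩, a, ha⟩ := hCA
  obtain ⟨SB, hSB, -, ⟨e₂, he₂⟩, b, hb⟩ := hCB
  let e : SB ≃ SA := e₂.symm.trans e₁
  let ψ : SB → A.carrier := Subtype.val ∘ e
  have he₂symm : Function.Semiconj e₂.symm (B.restrict SB hSB).op C.op :=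
    Function.Semiconj.inverse_left he₂ e₂.left_inv e₂.right_inv
  have hψ : Function.Semiconj ψ (B.restrict SB hSB).op A.op :=
    (MonoUnary.semiconj_val_restrict A SA hSA).comp_left (he₂symm.trans he₁)
  have hψinj : Function.Injective ψ := Subtype.val_injective.comp e.injective
  have hψrange : Set.range ψ = SA := by
    rw [Set.range_comp, e.range_eq_univ, Set.image_univ, Subtype.range_coe]
  have : Nonempty A.carrier := ⟨a⟩
  have : Nonempty B.carrier := ⟨b⟩
  exact ⟨MonoUnary.glue A B SB ψ, MonoUnary.largeEmb_glue_left hψ hb,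
    MonoUnary.largeEmb_glue_right hψ hψinj (hψrange ▸ ha)⟩
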